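/- Let (z_n)_{n∈ℕ} be the sequence of coordinate functions on 𝕋^ℕ equipped with the product of normalized Haar measures μ. Let X = L¹(m'') be an L¹-space, and let (f¹_n)_{n∈ℕ} and (f²_n)_{n∈ℕ} be sequences in X which are c₁-dominated and c₂-dominated by (z_n), respectively. Define the interleaved sequence (f_n) by f_{2k} = f²_k and f_{2k+1} = f¹_k. Then (f_n) is (c₁ + c₂)-dominated by (z_n); i.e., there is a bounded linear map u : L¹(𝕋^ℕ, μ) → X with ‖u‖ ≤ c₁ + c₂ and u(z_n) = f_n for all n. -/

import Mathlib

open MeasureTheory ProbabilityTheory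

/-- The normalized Haar (arc-length) measure of the unit circle, as a measure on `ℂ`:
the image of Lebesgue measure on `[0, 1)` under `θ ↦ e^{2πiθ}`. -/
noncomputable def circleMeasure : Measure ℂ :=
  Measure.map (fun θ : ℝ => Complex.exp (2 * Real.pi * θ * Complex.I))
    (volume.restrict (Set.Ico (0 : ℝ) 1))

/-! If `j` is injective, the sequences `(z (j k))ₖ` and `(z k)ₖ` have the same joint law `ν`
(both are i.i.d.). Conditional expectation onto `σ(z ∘ j)` is a contraction of `L¹(μ)`, and by
Doob–Dynkin `g ↦ g ∘ (z ∘ j)` identifies `L¹(ν)` isometrically with the `σ(z ∘ j)`-measurable part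
of `L¹(μ)`; composing with `g ↦ g ∘ z` gives a contraction sending `z (j k)` to `z k`. It kills
every `z n` with `n ∉ range j`, because such a `z n` is independent of `σ(z ∘ j)` and centred.
For the contractions `A₁`, `A₂` built from `j = 2k + 1` and `j = 2k`, `u = u₁ A₁ + u₂ A₂` works. -/

open scoped ENNReal

theorem integral_id_circleMeasure : ∫ w, w ∂circleMeasure = 0 := by
  have h_exp : ∀ θ : ℝ, Complex.exp (2 * Real.pi * θ * Complex.I) =
      Complex.exp (2 * Real.pi * Complex.I * θ) := fun θ => by ring_nf
  have h_ne : 2 * (Real.pi : ℂ) * Complex.I ≠ 0 := by simp [Real.pi_ne_zero]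
  rw [circleMeasure, integral_map (f := fun w => w) (by fun_prop) aestronglyMeasurable_id,
    integral_Ico_eq_integral_Ioc, ← intervalIntegral.integral_of_le zero_le_one]
  simp_rw [h_exp, integral_exp_mul_complex h_ne]
  simp [Complex.exp_two_pi_mul_I]

namespace MeasureTheory

section CompMeasurePreserving

variable {α β F : Type*} {m0 : MeasurableSpace α} {mβ : MeasurableSpace β}
  {μ : Measure α} {ν : Measure β} {S : α → β} {p : ℝ≥0∞}
  [NormedAddCommGroup F] [CompleteSpace F] (𝕜 : Type*) [RCLike 𝕜] [NormedSpace 𝕜 F]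

theorem Lp.range_compMeasurePreservingₗ (hS : MeasurePreserving S μ ν) :
    LinearMap.range (Lp.compMeasurePreservingₗ (E := F) (p := p) 𝕜 S hS) =
      lpMeas F 𝕜 (mβ.comap S) p μ := by
  ext f
  rw [mem_lpMeas_iff_aestronglyMeasurable]
  constructor
  · rintro ⟨g, rfl⟩
    exact ⟨g ∘ S, (Lp.stronglyMeasurable g).comp_measurable (comap_measurable S),
      Lp.coeFn_compMeasurePreserving g hS⟩
  · rintro ⟨_, hh, hfh⟩
    obtain ⟨g, hg, rfl⟩ := hh.exists_eq_measurable_comp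
    have hgLp : MemLp g p ν := by
      rw [← hS.map_eq, memLp_map_measure_iff hg.aestronglyMeasurable hS.measurable.aemeasurable]
      exact (Lp.memLp f).ae_eq hfh
    refine ⟨hgLp.toLp g, Lp.ext ?_⟩
    exact (Lp.coeFn_compMeasurePreserving _ hS).trans
      ((hS.quasiMeasurePreserving.ae_eq_comp hgLp.coeFn_toLp).trans hfh.symm)

noncomputable def Lp.compMeasurePreservingEquivLpMeas [Fact (1 ≤ p)]
    (hS : MeasurePreserving S μ ν) :
    Lp F p ν ≃ₗᵢ[𝕜] lpMeas F 𝕜 (mβ.comap S) p μ :=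
  (Lp.compMeasurePreservingₗᵢ 𝕜 S hS).equivRange.trans
    (LinearIsometryEquiv.ofEq _ _ (Lp.range_compMeasurePreservingₗ 𝕜 hS))

end CompMeasurePreserving

section CondExp

variable {α F : Type*} {m m0 : MeasurableSpace α} (𝕜 : Type*) [RCLike 𝕜]
  [NormedAddCommGroup F] [NormedSpace 𝕜 F] [NormedSpace ℝ F] [CompleteSpace F]

/-- `condExpL1CLM` is only `ℝ`-linear; `condExpL1CLM_smul` makes it `𝕜`-linear. -/
noncomputable def condExpL1LpMeas (hm : m ≤ m0) (μ : Measure α) [SigmaFinite (μ.trim hm)] :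
    Lp F 1 μ →L[𝕜] lpMeas F 𝕜 m 1 μ :=
  LinearMap.mkContinuous
    { toFun f := ⟨condExpL1CLM F hm μ f,
        mem_lpMeas_iff_aestronglyMeasurable.2 (aestronglyMeasurable_condExpL1CLM f)⟩
      map_add' f g := Subtype.ext (map_add _ f g)
      map_smul' c f := Subtype.ext (condExpL1CLM_smul c f) }
    1 fun f => by
      simpa [condExpL1CLM] using
        L1.norm_setToL1_le_mul_norm (dominatedFinMeasAdditive_condExpInd F hm μ) zero_le_one f

variable {𝕜} {hm : m ≤ m0} {μ : Measure α} [SigmaFinite (μ.trim hm)]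

theorem norm_condExpL1LpMeas_le : ‖condExpL1LpMeas (F := F) 𝕜 hm μ‖ ≤ 1 :=
  LinearMap.mkContinuous_norm_le _ zero_le_one _

theorem condExpL1LpMeas_of_mem {f : Lp F 1 μ} (hf : f ∈ lpMeas F 𝕜 m 1 μ) :
    condExpL1LpMeas 𝕜 hm μ f = ⟨f, hf⟩ :=
  Subtype.ext <|
    condExpL1CLM_of_aestronglyMeasurable' f (mem_lpMeas_iff_aestronglyMeasurable.1 hf)

theorem condExpL1LpMeas_eq_zero {f : Lp F 1 μ} (hf : μ[⇑f | m] =ᵐ[μ] 0) :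
    condExpL1LpMeas 𝕜 hm μ f = 0 := by
  refine Subtype.ext <| (Lp.eq_zero_iff_ae_eq_zero).2 ?_
  have h := condExp_ae_eq_condExpL1CLM hm (L1.integrable_coeFn f)
  rw [Integrable.toL1_coeFn] at h
  exact h.symm.trans hf

end CondExp

theorem exists_norm_le_one_compMeasurePreserving_eq
    {α β F : Type*} {m0 : MeasurableSpace α} {mβ : MeasurableSpace β}
    {μ : Measure α} [IsFiniteMeasure μ] {ν : Measure β} (𝕜 : Type*) [RCLike 𝕜]
    [NormedAddCommGroup F] [NormedSpace 𝕜 F] [NormedSpace ℝ F] [CompleteSpace F]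
    {S S' : α → β} (hS : MeasurePreserving S μ ν) (hS' : MeasurePreserving S' μ ν) :
    ∃ A : Lp F 1 μ →L[𝕜] Lp F 1 μ, ‖A‖ ≤ 1 ∧
      (∀ g, A (Lp.compMeasurePreserving S hS g) = Lp.compMeasurePreserving S' hS' g) ∧
      ∀ f : Lp F 1 μ, μ[⇑f | mβ.comap S] =ᵐ[μ] 0 → A f = 0 := by
  have hm : mβ.comap S ≤ m0 := hS.measurable.comap_le
  let e := Lp.compMeasurePreservingEquivLpMeas (F := F) (p := 1) 𝕜 hS
  let E := condExpL1LpMeas (F := F) 𝕜 hm μ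
  let A := (Lp.compMeasurePreservingₗᵢ 𝕜 S' hS').toContinuousLinearMap ∘L
    e.symm.toLinearIsometry.toContinuousLinearMap ∘L E
  have hA : ∀ f, A f = Lp.compMeasurePreserving S' hS' (e.symm (E f)) := fun _ => rfl
  refine ⟨A, ?_, fun g => ?_, fun f hf => ?_⟩
  · refine ContinuousLinearMap.opNorm_le_bound _ zero_le_one fun f => ?_
    rw [hA, Lp.norm_compMeasurePreserving, LinearIsometryEquiv.norm_map, one_mul]
    exact E.le_of_opNorm_le norm_condExpL1LpMeas_le f |>.trans_eq (one_mul _)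
  · have hE : E (Lp.compMeasurePreserving S hS g) = e g := condExpL1LpMeas_of_mem (e g).2
    rw [hA, hE, e.symm_apply_apply]
  · rw [hA, condExpL1LpMeas_eq_zero hf, map_zero, map_zero]

end MeasureTheory

namespace ProbabilityTheory

variable {Ω ι β : Type*} {mΩ : MeasurableSpace Ω} {μ : Measure Ω} [MeasurableSpace β]
  {z : ι → Ω → β}

theorem iIndepFun.map_reindex_eq [IsProbabilityMeasure μ] (h : iIndepFun z μ)
    (hz : ∀ i, Measurable (z i)) {ν₀ : Measure β} (hlaw : ∀ i, μ.map (z i) = ν₀)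
    {j : ι → ι} (hj : j.Injective) :
    μ.map (fun ω k => z (j k) ω) = μ.map (fun ω k => z k ω) := by
  rw [(h.precomp hj).map_fun_eq_infinitePi_map (fun k => hz (j k)),
    h.map_fun_eq_infinitePi_map hz]
  simp only [hlaw]

theorem iIndepFun.indepFun_reindex_of_notMem_range {κ : Type*} (h : iIndepFun z μ)
    (hz : ∀ i, Measurable (z i)) {j : κ → ι} {n : ι} (hn : n ∉ Set.range j) :
    IndepFun (z n) (fun ω k => z (j k) ω) μ := by
  have h_compl := indep_biSup_compl (fun i => (hz i).comap_le)
    ((iIndepFun_iff_iIndep _ z μ).1 h) {n}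
  rw [IndepFun_iff_Indep]
  refine indep_of_indep_of_le_right (by simpa using h_compl) ?_
  let m' : MeasurableSpace Ω := ⨆ i ∈ ({n}ᶜ : Set ι), MeasurableSpace.comap (z i) inferInstance
  -- `m'` is given explicitly: elaboration would otherwise pick the ambient instance `mΩ`.
  have h_meas : Measurable[m'] fun ω k => z (j k) ω :=
    (@measurable_pi_iff Ω κ (fun _ => β) m' _ _).2 fun k =>
      measurable_iff_comap_le.2 (le_iSup₂_of_le (j k) (fun hk => hn ⟨k, hk⟩) le_rfl)
  exact measurable_iff_comap_le.1 h_meas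

theorem iIndepFun.exists_norm_le_one_reindex [IsProbabilityMeasure μ] (𝕜 : Type*) [RCLike 𝕜]
    {F : Type*} [NormedAddCommGroup F] [NormedSpace 𝕜 F] [NormedSpace ℝ F] [CompleteSpace F]
    [MeasurableSpace F] [BorelSpace F] [SecondCountableTopology F]
    {z : ι → Ω → F} (h : iIndepFun z μ) (hz : ∀ i, Measurable (z i))
    {ν₀ : Measure F} (hlaw : ∀ i, μ.map (z i) = ν₀) (hmean : ∫ x, x ∂ν₀ = 0)
    (hzmem : ∀ i, MemLp (z i) 1 μ) {j : ι → ι} (hj : j.Injective) :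
    ∃ A : Lp F 1 μ →L[𝕜] Lp F 1 μ, ‖A‖ ≤ 1 ∧
      (∀ k, A ((hzmem (j k)).toLp (z (j k))) = (hzmem k).toLp (z k)) ∧
      ∀ n ∉ Set.range j, A ((hzmem n).toLp (z n)) = 0 := by
  have hS : MeasurePreserving (fun ω k => z k ω) μ (μ.map fun ω k => z k ω) :=
    ⟨measurable_pi_iff.2 hz, rfl⟩
  have hSj : MeasurePreserving (fun ω k => z (j k) ω) μ (μ.map fun ω k => z k ω) :=
    ⟨measurable_pi_iff.2 fun k => hz (j k), h.map_reindex_eq hz hlaw hj⟩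
  have hcoord : ∀ k, MemLp (fun x : ι → F => x k) 1 (μ.map fun ω k => z k ω) := fun k =>
    (memLp_map_measure_iff (measurable_pi_apply k).aestronglyMeasurable
      hS.measurable.aemeasurable).2 (hzmem k)
  obtain ⟨A, hA_norm, hA_comp, hA_zero⟩ :=
    exists_norm_le_one_compMeasurePreserving_eq (F := F) 𝕜 hSj hS
  refine ⟨A, hA_norm, fun k => hA_comp ((hcoord k).toLp _), fun n hn => hA_zero _ ?_⟩
  have h_mean : μ[z n] = 0 := by
    rw [← integral_map (f := fun x => x) (hz n).aemeasurable aestronglyMeasurable_id, hlaw n,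
      hmean]
  calc μ[⇑((hzmem n).toLp (z n)) | MeasurableSpace.comap _ _]
      =ᵐ[μ] μ[z n | MeasurableSpace.comap (fun ω k => z (j k) ω) MeasurableSpace.pi] :=
        condExp_congr_ae (hzmem n).coeFn_toLp
    _ =ᵐ[μ] fun _ => μ[z n] :=
        condExp_indep_eq (hz n).comap_le hSj.measurable.comap_le
          (comap_measurable (z n)).stronglyMeasurable
          ((IndepFun_iff_Indep _ _ _).1 (h.indepFun_reindex_of_notMem_range hz hn))
    _ = 0 := by rw [h_mean]; rfl

end ProbabilityTheory

/-- Let `(z_n)` be an i.i.d. sequence of Steinhaus variables (the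
coordinate functions on `𝕋^ℕ` with the product of normalized Haar measures), and let
`(f¹_n)`, `(f²_n)` be sequences in an `L¹`-space `X = L¹(m'')` that are respectively
`c₁`- and `c₂`-dominated by `(z_n)`. Then the interleaved sequence `f_{2k} = f²_k`,
`f_{2k+1} = f¹_k` is `(c₁ + c₂)`-dominated by `(z_n)`: there is a bounded linear map
`u : L¹(μ) → X` with `‖u‖ ≤ c₁ + c₂` and `u(z_n) = f_n` for all `n`. -/
theorem interleaving_dominated {Ω : Type} [mΩ : MeasurableSpace Ω] (μ : Measure Ω)
    [IsProbabilityMeasure μ]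
    (z : ℕ → Ω → ℂ) (hzmeas : ∀ n, Measurable (z n))
    (hzindep : iIndepFun z μ)
    (hzdist : ∀ n, Measure.map (z n) μ = circleMeasure)
    (hzmem : ∀ n, MemLp (z n) 1 μ)
    {X : Type} [mX : MeasurableSpace X] (m'' : Measure X)
    (f1 f2 : ℕ → X → ℂ)
    (hf1mem : ∀ n, MemLp (f1 n) 1 m'') (hf2mem : ∀ n, MemLp (f2 n) 1 m'')
    (c1 c2 : ℝ)
    (u1 : Lp ℂ 1 μ →L[ℂ] Lp ℂ 1 m'') (hu1 : ‖u1‖ ≤ c1)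
    (hu1z : ∀ n, u1 ((hzmem n).toLp (z n)) = (hf1mem n).toLp (f1 n))
    (u2 : Lp ℂ 1 μ →L[ℂ] Lp ℂ 1 m'') (hu2 : ‖u2‖ ≤ c2)
    (hu2z : ∀ n, u2 ((hzmem n).toLp (z n)) = (hf2mem n).toLp (f2 n)) :
    ∃ u : Lp ℂ 1 μ →L[ℂ] Lp ℂ 1 m'',
      ‖u‖ ≤ c1 + c2 ∧
      (∀ k, u ((hzmem (2 * k)).toLp (z (2 * k))) = (hf2mem k).toLp (f2 k)) ∧
      (∀ k, u ((hzmem (2 * k + 1)).toLp (z (2 * k + 1))) = (hf1mem k).toLp (f1 k)) := by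
  obtain ⟨A1, hA1, hA1_odd, hA1_even⟩ :=
    hzindep.exists_norm_le_one_reindex ℂ hzmeas hzdist integral_id_circleMeasure hzmem
      (j := fun k => 2 * k + 1) fun a b h => by simpa using h
  obtain ⟨A2, hA2, hA2_even, hA2_odd⟩ :=
    hzindep.exists_norm_le_one_reindex ℂ hzmeas hzdist integral_id_circleMeasure hzmem
      (j := fun k => 2 * k) fun a b h => by simpa using h
  refine ⟨u1 ∘L A1 + u2 ∘L A2, ?_, fun k => ?_, fun k => ?_⟩
  · calc ‖u1 ∘L A1 + u2 ∘L A2‖ ≤ ‖u1‖ * ‖A1‖ + ‖u2‖ * ‖A2‖ :=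
          (norm_add_le _ _).trans (add_le_add (u1.opNorm_comp_le A1) (u2.opNorm_comp_le A2))
      _ ≤ c1 + c2 := add_le_add ((mul_le_of_le_one_right (norm_nonneg _) hA1).trans hu1)
          ((mul_le_of_le_one_right (norm_nonneg _) hA2).trans hu2)
  · have hk : 2 * k ∉ Set.range fun i => 2 * i + 1 := by
      rintro ⟨i, hi : 2 * i + 1 = 2 * k⟩; omega
    simp [hA1_even _ hk, hA2_even k, hu2z k]
  · have hk : 2 * k + 1 ∉ Set.range fun i => 2 * i := by
      rintro ⟨i, hi : 2 * i = 2 * k + 1⟩; omega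
    simp [hA1_odd k, hA2_odd _ hk, hu1z k]
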